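/- arXiv:cs/0107024 — 2 statements merged into one kernel-verified Lean document; each statement's English description precedes it below -/
import Mathlib

section
/- For every convex polygon P and every point x on its boundary, the perimeter-halving gluing (which identifies the boundary arc from x to the antipodal perimeter point y with the reverse arc from y to x by arc length) glues at most 2π of total interior angle at every identified point. Consequently, by Aleksandrov's theorem, every convex polygon folds to a convex polytope via perimeter halving. -/
open Real Set

noncomputable section

/-- Abstract model of a polygon via its boundary: the circle `ℝ / Lℤ` of perimeter `L`
(parametrised by arc length), a finite set of vertices, and an interior-angle function
which equals `π` at every non-vertex boundary point. -/
structure AbstractPolygon where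
  L : ℝ
  Lpos : 0 < L
  V : Set (AddCircle L)
  Vfin : V.Finite
  angle : AddCircle L → ℝ
  angle_pos : ∀ p, 0 < angle p
  angle_lt : ∀ p, angle p < 2 * π
  nonvertex_angle : ∀ p, p ∉ V → angle p = π

/-- Convexity: every interior angle is at most `π`. -/
def AbstractPolygon.IsConvex (P : AbstractPolygon) : Prop := ∀ p, P.angle p ≤ π

/-- The set of boundary points identified with `p` by the gluing `s`. -/
def glueClass {L : ℝ} (s : Setoid (AddCircle L)) (p : AddCircle L) : Set (AddCircle L) :=
  {q | s.r p q}

/-- The total face angle glued together at the identified point of `p`. -/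
def gluedAngle (P : AbstractPolygon) (s : Setoid (AddCircle P.L)) (p : AddCircle P.L) : ℝ :=
  ∑ᶠ q ∈ glueClass s p, P.angle q

/-- A gluing is length preserving: each identification extends locally by arc length
(on each side, possibly reversing orientation). -/
def LengthPreserving {L : ℝ} (s : Setoid (AddCircle L)) : Prop :=
  ∀ p q : AddCircle L, s.r p q →
    ∃ ε > (0 : ℝ),
      (∀ t : ℝ, 0 < t → t < ε →
        s.r (p + (t : AddCircle L)) (q + (t : AddCircle L)) ∨
        s.r (p + (t : AddCircle L)) (q - (t : AddCircle L))) ∧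
      (∀ t : ℝ, 0 < t → t < ε →
        s.r (p - (t : AddCircle L)) (q + (t : AddCircle L)) ∨
        s.r (p - (t : AddCircle L)) (q - (t : AddCircle L)))

/-- The two-complex obtained from the gluing: the polygon is a topological disk,
modelled as the cone over its boundary circle, and its boundary is glued via `s`. -/
def complexSetoid (L : ℝ) (s : Setoid (AddCircle L)) :
    Setoid (AddCircle L × unitInterval) :=
  Relation.EqvGen.setoid (fun a b =>
    (a.2 = 1 ∧ b.2 = 1 ∧ s.r a.1 b.1) ∨ (a.2 = 0 ∧ b.2 = 0))

/-- Aleksandrov's second condition: the glued complex is homeomorphic to the 2-sphere. -/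
def SphereComplex (P : AbstractPolygon) (s : Setoid (AddCircle P.L)) : Prop :=
  Nonempty (Quotient (complexSetoid P.L s) ≃ₜ
    Metric.sphere (0 : EuclideanSpace ℝ (Fin 3)) 1)

/-- An Aleksandrov gluing: a length-preserving self-identification of the boundary,
gluing at most `2π` of face angle at every point, whose complex is a sphere. -/
structure IsAleksandrovGluing (P : AbstractPolygon) (s : Setoid (AddCircle P.L)) : Prop where
  length_preserving : LengthPreserving s
  classes_finite : ∀ p, (glueClass s p).Finite
  angle_le : ∀ p, gluedAngle P s p ≤ 2 * π
  sphere : SphereComplex P s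

/-- The perimeter-halving gluing at `x`: the point at arc length `t` past `x` is glued to
the point at arc length `t` before `x` (equivalently, `p` is glued to `q` iff `p + q = 2x`). -/
def perimHalvingSetoid (L : ℝ) (x : AddCircle L) : Setoid (AddCircle L) :=
  Relation.EqvGen.setoid (fun p q => p + q = x + x)


/-! ### Auxiliary lemmas -/

open Complex

lemma perim_rel_iff {L : ℝ} (x p q : AddCircle L) :
    (perimHalvingSetoid L x).r p q ↔ p = q ∨ p + q = x + x := by
  constructor
  · intro h
    induction h with
    | rel a b hab => exact Or.inr hab
    | refl a => exact Or.inl rfl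
    | symm a b _ ih =>
      rcases ih with h | h
      · exact Or.inl h.symm
      · exact Or.inr (by rw [add_comm]; exact h)
    | trans a b c _ _ ih1 ih2 =>
      rcases ih1 with h1 | h1 <;> rcases ih2 with h2 | h2
      · exact Or.inl (h1.trans h2)
      · exact Or.inr (h1 ▸ h2)
      · exact Or.inr (h2 ▸ h1)
      · refine Or.inl ?_
        have : a + b = c + b := by rw [h1, add_comm c b, h2]
        exact add_right_cancel this
  · rintro (rfl | h)
    · exact Relation.EqvGen.refl p
    · exact Relation.EqvGen.rel p q h

lemma glueClass_eq {L : ℝ} (x p : AddCircle L) :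
    {q | (perimHalvingSetoid L x).r p q} = {p, x + x - p} := by
  ext q
  simp only [mem_setOf_eq, mem_insert_iff, mem_singleton_iff, perim_rel_iff]
  constructor
  · rintro (rfl | h)
    · exact Or.inl rfl
    · exact Or.inr (by rw [← h]; abel)
  · rintro (rfl | rfl)
    · exact Or.inl rfl
    · exact Or.inr (by abel)

namespace PH

def A (z : ℂ) : ℂ := (starRingEnd ℂ) z * (z ^ 2 + 1)
def D (z : ℂ) : ℝ := normSq (z ^ 2 + 1) + 4 * normSq z
lemma D_pos (z : ℂ) : 0 < D z := by
  rcases eq_or_ne z 0 with rfl | hz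
  · simp [D]
  · have h1 : 0 < normSq z := normSq_pos.2 hz
    have h2 : 0 ≤ normSq (z ^ 2 + 1) := normSq_nonneg _
    unfold D; nlinarith
def f1 (z : ℂ) : ℝ := 4 * (A z).re / D z
def f2 (z : ℂ) : ℝ := 4 * (A z).im / D z
def f3 (z : ℂ) : ℝ := (normSq (z ^ 2 + 1) - 4 * normSq z) / D z
lemma sum_sq (z : ℂ) : f1 z ^ 2 + f2 z ^ 2 + f3 z ^ 2 = 1 := by
  have hD := D_pos z
  have h : (A z).re ^ 2 + (A z).im ^ 2 = normSq z * normSq (z ^ 2 + 1) := by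
    have : normSq (A z) = normSq z * normSq (z ^ 2 + 1) := by
      rw [A, map_mul, normSq_conj]
    simpa [normSq_apply, sq] using this
  have key : (4 * (A z).re) ^ 2 + (4 * (A z).im) ^ 2
      + (normSq (z ^ 2 + 1) - 4 * normSq z) ^ 2 = (D z) ^ 2 := by
    unfold D; nlinarith [h]
  field_simp [f1, f2, f3]
  rw [f1, f2, f3, div_pow, div_pow, div_pow, ← add_div, ← add_div,
    div_eq_one_iff_eq (pow_ne_zero 2 hD.ne')]
  linarith [key]

/-- The folded map into `ℝ³`. -/
def Fv (z : ℂ) : EuclideanSpace ℝ (Fin 3) :=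
  (WithLp.equiv 2 (Fin 3 → ℝ)).symm ![f1 z, f2 z, f3 z]

lemma Fv_mem (z : ℂ) : Fv z ∈ Metric.sphere (0 : EuclideanSpace ℝ (Fin 3)) 1 := by
  rw [mem_sphere_zero_iff_norm, EuclideanSpace.norm_eq]
  rw [show (1:ℝ) = Real.sqrt 1 by simp]
  congr 1
  simp only [Fv, WithLp.equiv_symm_apply, PiLp.toLp_apply, Fin.sum_univ_three]
  simp [Real.norm_eq_abs, sq_abs]
  linarith [sum_sq z]

lemma Fv_continuous : Continuous Fv := by
  have hA : Continuous A := by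
    unfold A; exact (continuous_conj).mul (by continuity)
  have hD : Continuous D := by
    unfold D
    exact ((Complex.continuous_normSq).comp (by continuity)).add
      (continuous_const.mul Complex.continuous_normSq)
  have h1 : Continuous f1 :=
    (continuous_const.mul (Complex.continuous_re.comp hA)).div hD fun z => (D_pos z).ne'
  have h2 : Continuous f2 :=
    (continuous_const.mul (Complex.continuous_im.comp hA)).div hD fun z => (D_pos z).ne'
  have h3 : Continuous f3 :=
    (((Complex.continuous_normSq).comp (by continuity)).sub
      (continuous_const.mul Complex.continuous_normSq)).div hD fun z => (D_pos z).ne'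
  have : Continuous (fun z : ℂ => ![f1 z, f2 z, f3 z]) := by
    refine continuous_pi fun i => ?_
    fin_cases i
    · simpa using h1
    · simpa using h2
    · simpa using h3
  exact (PiLp.continuous_toLp 2 (fun _ : Fin 3 => ℝ)).comp this

lemma Fv_conj {z : ℂ} (hz : normSq z = 1) : Fv ((starRingEnd ℂ) z) = Fv z := by
  have h1 : z * (starRingEnd ℂ) z = 1 := by rw [Complex.mul_conj, hz]; simp
  have hAc : A ((starRingEnd ℂ) z) = (starRingEnd ℂ) (A z) := by
    simp only [A, map_mul, map_add, map_pow, Complex.conj_conj, map_one]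
  have hAz : A z = z + (starRingEnd ℂ) z := by
    rw [A]; linear_combination z * h1
  have him : (A z).im = 0 := by
    rw [hAz]; simp
  have hD : D ((starRingEnd ℂ) z) = D z := by
    unfold D
    rw [show ((starRingEnd ℂ) z) ^ 2 + 1 = (starRingEnd ℂ) (z ^ 2 + 1) by
      simp [map_add, map_pow], normSq_conj, normSq_conj]
  have hsq : ((starRingEnd ℂ) z) ^ 2 + 1 = (starRingEnd ℂ) (z ^ 2 + 1) := by
    simp [map_add, map_pow]
  unfold Fv
  congr 1
  funext i
  fin_cases i
  · show f1 ((starRingEnd ℂ) z) = f1 z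
    unfold f1
    rw [hAc, hD]
    simp
  · show f2 ((starRingEnd ℂ) z) = f2 z
    unfold f2
    rw [hAc, hD]
    simp [him]
  · show f3 ((starRingEnd ℂ) z) = f3 z
    unfold f3
    rw [hD, hsq, normSq_conj, normSq_conj]

lemma f3_eq_one {z : ℂ} (h : f3 z = 1) : z = 0 := by
  have hD := D_pos z
  rw [f3, div_eq_one_iff_eq (ne_of_gt hD), D] at h
  have : normSq z = 0 := by linarith
  exact normSq_eq_zero.1 this

lemma inj_aux {z w : ℂ} (h1 : f1 z = f1 w) (h2 : f2 z = f2 w) (h3 : f3 z = f3 w) :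
    z = w ∨ z * w = 1 := by
  rcases eq_or_ne z 0 with rfl | hz
  · rcases eq_or_ne w 0 with rfl | hw
    · exact Or.inl rfl
    · exact absurd (f3_eq_one (by rw [← h3]; simp [f3, D])) hw
  rcases eq_or_ne w 0 with rfl | hw
  · exact absurd (f3_eq_one (by rw [h3]; simp [f3, D])) hz
  -- both nonzero
  have hDz := D_pos z
  have hDw := D_pos w
  have hQz : (0:ℝ) < 4 * normSq z := by have := normSq_pos.2 hz; linarith
  have hQw : (0:ℝ) < 4 * normSq w := by have := normSq_pos.2 hw; linarith
  -- Q z * D w = Q w * D z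
  have hQ : (4 * normSq z) * D w = (4 * normSq w) * D z := by
    rw [f3, f3, div_eq_div_iff (ne_of_gt hDz) (ne_of_gt hDw)] at h3
    unfold D at *
    nlinarith [h3]
  rw [f1, f1, div_eq_div_iff (ne_of_gt hDz) (ne_of_gt hDw)] at h1
  rw [f2, f2, div_eq_div_iff (ne_of_gt hDz) (ne_of_gt hDw)] at h2
  have hre : (A z).re * (4 * normSq w) = (A w).re * (4 * normSq z) :=
    mul_left_cancel₀ (ne_of_gt hDz) (by linear_combination (-(A z).re) * hQ + (normSq z) * h1)
  have him : (A z).im * (4 * normSq w) = (A w).im * (4 * normSq z) :=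
    mul_left_cancel₀ (ne_of_gt hDz) (by linear_combination (-(A z).im) * hQ + (normSq z) * h2)
  have hA : A z * (((4 * normSq w : ℝ)) : ℂ) = A w * (((4 * normSq z : ℝ)) : ℂ) := by
    apply Complex.ext <;> simp [Complex.mul_re, Complex.mul_im] <;> simpa using (by assumption)
  rw [ofReal_mul, ofReal_mul, ← Complex.mul_conj, ← Complex.mul_conj] at hA
  have hfac : (z - w) * (z * w - 1) * ((starRingEnd ℂ) z * (starRingEnd ℂ) w) = 0 := by
    unfold A at hA
    push_cast at hA
    linear_combination (1/4 : ℂ) * hA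
  have hcz : (starRingEnd ℂ) z * (starRingEnd ℂ) w ≠ 0 :=
    mul_ne_zero (by simpa using hz) (by simpa using hw)
  rcases mul_eq_zero.1 hfac with h | h
  · rcases mul_eq_zero.1 h with h | h
    · exact Or.inl (sub_eq_zero.1 h)
    · exact Or.inr (sub_eq_zero.1 h)
  · exact absurd h hcz

lemma surj_aux {a b c : ℝ} (h : a ^ 2 + b ^ 2 + c ^ 2 = 1) :
    ∃ z : ℂ, ‖z‖ ≤ 1 ∧ f1 z = a ∧ f2 z = b ∧ f3 z = c := by
  rcases eq_or_ne c 1 with rfl | hc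
  · refine ⟨0, by simp, ?_, ?_, ?_⟩ <;>
      simp [f1, f2, f3, A, D] <;> nlinarith [sq_nonneg a, sq_nonneg b]
  · have hc1 : c < 1 := lt_of_le_of_ne
      (by nlinarith [sq_nonneg a, sq_nonneg b, sq_nonneg (c-1), sq_nonneg (c+1)]) hc
    have hu : (0:ℝ) < 1 - c := by linarith
    set x : ℝ := a / (1 - c) with hx
    set y : ℝ := b / (1 - c) with hy
    set w : ℂ := (x : ℝ) + (y : ℝ) * I with hw
    obtain ⟨s, hs⟩ : ∃ s : ℂ, s ^ 2 = w ^ 2 - 1 :=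
      IsAlgClosed.exists_pow_nat_eq (w ^ 2 - 1) (by norm_num)
    have hprod : (w + s) * (w - s) = 1 := by linear_combination -hs
    set z : ℂ := if ‖w + s‖ ≤ 1 then w + s else w - s with hz
    have habs : ‖z‖ ≤ 1 := by
      rw [hz]; split_ifs with h'
      · exact h'
      · push_neg at h'
        have h1 : ‖w + s‖ * ‖w - s‖ = 1 := by
          rw [← norm_mul, hprod, norm_one]
        nlinarith [norm_nonneg (w - s)]
    have hquad : z ^ 2 + 1 = 2 * w * z := by
      rw [hz]; split_ifs <;> linear_combination -hprod
    have hz0 : z ≠ 0 := by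
      intro h0
      rw [h0] at hquad; simp at hquad
    have hq : 0 < normSq z := normSq_pos.2 hz0
    have hu' : (1 - c) ≠ 0 := ne_of_gt hu
    have hnw : normSq w = x^2 + y^2 := by
      rw [hw]; exact normSq_add_mul_I _ _
    have hP : normSq (z ^ 2 + 1) = 4 * normSq w * normSq z := by
      rw [hquad, map_mul, map_mul]
      have : normSq (2:ℂ) = 4 := by norm_num [Complex.normSq_apply]
      rw [this]
    have hA : A z = 2 * w * ((normSq z : ℝ) : ℂ) := by
      rw [A, hquad, ← Complex.mul_conj]; ring
    have hre : (A z).re = 2 * x * normSq z := by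
      rw [hA, hw]; simp [Complex.mul_re, Complex.mul_im]
    have him : (A z).im = 2 * y * normSq z := by
      rw [hA, hw]; simp [Complex.mul_re, Complex.mul_im]
    have hD : D z = 4 * normSq z * ((x^2 + y^2) + 1) := by
      rw [D, hP, hnw]; ring
    have hxy : x^2 + y^2 + 1 = 2 / (1 - c) := by
      rw [hx, hy]; field_simp; nlinarith [h]
    have hpos : x^2 + y^2 + 1 > 0 := by positivity
    refine ⟨z, habs, ?_, ?_, ?_⟩
    · rw [f1, hre, hD]
      rw [show (4:ℝ) * (2 * x * normSq z) = (2 * x) * (4 * normSq z) by ring,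
        show (4:ℝ) * normSq z * (x^2+y^2+1) = (x^2+y^2+1) * (4 * normSq z) by ring,
        mul_div_mul_right _ _ (by positivity), hxy, hx]
      field_simp
    · rw [f2, him, hD]
      rw [show (4:ℝ) * (2 * y * normSq z) = (2 * y) * (4 * normSq z) by ring,
        show (4:ℝ) * normSq z * (x^2+y^2+1) = (x^2+y^2+1) * (4 * normSq z) by ring,
        mul_div_mul_right _ _ (by positivity), hxy, hy]
      field_simp
    · rw [f3, hP, hnw, hD]
      rw [show (4:ℝ) * (x^2+y^2) * normSq z - 4 * normSq z = (x^2+y^2-1) * (4 * normSq z) by ring,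
        show (4:ℝ) * normSq z * (x^2+y^2+1) = (x^2+y^2+1) * (4 * normSq z) by ring,
        mul_div_mul_right _ _ (by positivity)]
      have : x^2 + y^2 - 1 = 2*c / (1 - c) := by
        rw [hx, hy]; field_simp; nlinarith [h]
      rw [this, hxy]
      field_simp

def zmap {L : ℝ} (x : AddCircle L) (a : AddCircle L × unitInterval) : ℂ :=
  ((a.2 : ℝ) : ℂ) * (AddCircle.toCircle (a.1 - x) : ℂ)

lemma zmap_abs {L : ℝ} (x : AddCircle L) (a : AddCircle L × unitInterval) :
    ‖zmap x a‖ = (a.2 : ℝ) := by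
  rw [zmap, norm_mul]
  simp [_root_.abs_of_nonneg a.2.2.1, Circle.norm_coe]

lemma zmap_continuous {L : ℝ} (x : AddCircle L) : Continuous (zmap x) := by
  apply Continuous.mul
  · exact Complex.continuous_ofReal.comp (continuous_subtype_val.comp continuous_snd)
  · exact continuous_subtype_val.comp ((AddCircle.continuous_toCircle).comp
      ((continuous_sub_right x).comp continuous_fst))

lemma Fv_def : ∀ z, Fv z = (WithLp.equiv 2 (Fin 3 → ℝ)).symm ![f1 z, f2 z, f3 z] :=
  fun _ => rfl

lemma sphere_complex {L : ℝ} (hL : 0 < L) (x : AddCircle L) :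
    Nonempty (Quotient (complexSetoid L (perimHalvingSetoid L x)) ≃ₜ
      Metric.sphere (0 : EuclideanSpace ℝ (Fin 3)) 1) := by
  haveI : Fact (0 < L) := ⟨hL⟩
  set s := perimHalvingSetoid L x with hs
  -- the candidate map
  set Gs : AddCircle L × unitInterval → Metric.sphere (0 : EuclideanSpace ℝ (Fin 3)) 1 :=
    fun a => ⟨Fv (zmap x a), Fv_mem _⟩ with hGs
  have hzero : ∀ a : AddCircle L × unitInterval, a.2 = 0 → zmap x a = 0 := by
    intro a h
    rw [zmap, h]
    simp
  have hconst : ∀ a b : AddCircle L × unitInterval,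
      ((a.2 = 1 ∧ b.2 = 1 ∧ s.r a.1 b.1) ∨ (a.2 = 0 ∧ b.2 = 0)) → Gs a = Gs b := by
    rintro a b (⟨ha2, hb2, hr⟩ | ⟨ha2, hb2⟩)
    · rw [perim_rel_iff] at hr
      rcases hr with h1 | h1
      · have : a = b := Prod.ext h1 (ha2.trans hb2.symm)
        rw [this]
      · -- fold case
        apply Subtype.ext
        show Fv (zmap x a) = Fv (zmap x b)
        have hza : zmap x a = (AddCircle.toCircle (a.1 - x) : ℂ) := by
          rw [zmap, ha2]; simp
        have hzb : zmap x b = (AddCircle.toCircle (b.1 - x) : ℂ) := by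
          rw [zmap, hb2]; simp
        have hinv : AddCircle.toCircle (b.1 - x) = (AddCircle.toCircle (a.1 - x))⁻¹ := by
          rw [eq_inv_iff_mul_eq_one, ← AddCircle.toCircle_add]
          have : b.1 - x + (a.1 - x) = 0 := by
            rw [sub_add_sub_comm, sub_eq_zero, add_comm b.1 a.1, h1]
          rw [this, AddCircle.toCircle_zero]
        rw [hza, hzb, hinv, Circle.coe_inv_eq_conj]
        exact (Fv_conj (Circle.normSq_coe _)).symm
    · apply Subtype.ext
      show Fv (zmap x a) = Fv (zmap x b)
      rw [hzero a ha2, hzero b hb2]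
  have hlift : ∀ a b : AddCircle L × unitInterval,
      (complexSetoid L s).r a b → Gs a = Gs b := by
    intro a b h
    induction h with
    | rel a b hab => exact hconst a b hab
    | refl a => rfl
    | symm a b _ ih => exact ih.symm
    | trans a b c _ _ ih1 ih2 => exact ih1.trans ih2
  set G : Quotient (complexSetoid L s) → Metric.sphere (0 : EuclideanSpace ℝ (Fin 3)) 1 :=
    Quotient.lift Gs hlift with hG
  have hinj : Function.Injective G := by
    intro q1 q2
    refine Quotient.inductionOn₂ q1 q2 fun a b h => ?_
    have hFv : Fv (zmap x a) = Fv (zmap x b) := Subtype.ext_iff.1 h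
    rw [Fv_def, Fv_def] at hFv
    have hcomp := congrArg (WithLp.equiv 2 (Fin 3 → ℝ)) hFv
    rw [Equiv.apply_symm_apply, Equiv.apply_symm_apply] at hcomp
    have e1 : f1 (zmap x a) = f1 (zmap x b) := congrFun hcomp 0
    have e2 : f2 (zmap x a) = f2 (zmap x b) := congrFun hcomp 1
    have e3 : f3 (zmap x a) = f3 (zmap x b) := congrFun hcomp 2
    apply Quotient.sound
    rcases inj_aux e1 e2 e3 with he | hm
    · have habs : (a.2 : ℝ) = (b.2 : ℝ) := by
        rw [← zmap_abs x a, ← zmap_abs x b, he]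
      rcases eq_or_ne (a.2 : ℝ) 0 with h0 | h0
      · exact Relation.EqvGen.rel _ _ (Or.inr
          ⟨Subtype.ext h0, Subtype.ext (habs ▸ h0)⟩)
      · have hcirc : (AddCircle.toCircle (a.1 - x) : ℂ) = (AddCircle.toCircle (b.1 - x) : ℂ) := by
          rw [zmap, zmap, ← habs] at he
          exact mul_left_cancel₀ (by exact_mod_cast h0) he
        have h1 : a.1 = b.1 := by
          have := AddCircle.injective_toCircle (ne_of_gt hL) (Circle.coe_injective hcirc)
          exact sub_left_injective this
        have h2 : a.2 = b.2 := Subtype.ext habs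
        rw [show a = b from Prod.ext h1 h2]
    · have habs : (a.2 : ℝ) * (b.2 : ℝ) = 1 := by
        have := congrArg (‖·‖) hm
        rw [norm_mul, zmap_abs, zmap_abs] at this
        simpa using this
      have ha1 : (a.2 : ℝ) = 1 :=
        le_antisymm a.2.2.2 (by nlinarith [a.2.2.1, a.2.2.2, b.2.2.1, b.2.2.2])
      have hb1 : (b.2 : ℝ) = 1 := by nlinarith
      have hcirc : AddCircle.toCircle (a.1 - x) * AddCircle.toCircle (b.1 - x) = 1 := by
        apply Circle.coe_injective
        rw [Circle.coe_mul, Circle.coe_one]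
        rw [zmap, zmap, ha1, hb1] at hm
        simpa using hm
      rw [← AddCircle.toCircle_add, show (1 : Circle) = AddCircle.toCircle (0 : AddCircle L) from
        (AddCircle.toCircle_zero).symm] at hcirc
      have hsum : a.1 - x + (b.1 - x) = 0 := AddCircle.injective_toCircle (ne_of_gt hL) hcirc
      have hsum' : a.1 + b.1 = x + x := by
        rw [sub_add_sub_comm, sub_eq_zero] at hsum
        exact hsum
      exact Relation.EqvGen.rel _ _ (Or.inl ⟨Subtype.ext ha1, Subtype.ext hb1,
        Relation.EqvGen.rel _ _ hsum'⟩)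
  have hsurj : Function.Surjective G := by
    rintro ⟨v, hv⟩
    have hsum : (v 0) ^ 2 + (v 1) ^ 2 + (v 2) ^ 2 = 1 := by
      rw [mem_sphere_zero_iff_norm, EuclideanSpace.norm_eq, Real.sqrt_eq_one] at hv
      simpa [Fin.sum_univ_three, Real.norm_eq_abs, _root_.sq_abs] using hv
    obtain ⟨z, habs, hf1, hf2, hf3⟩ := surj_aux hsum
    have hFvz : Fv z = v := by
      rw [Fv_def, Equiv.symm_apply_eq]
      funext i
      fin_cases i <;> simp [hf1, hf2, hf3, WithLp.equiv_apply]
    rcases eq_or_ne z 0 with rfl | hz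
    · refine ⟨⟦(x, 0)⟧, ?_⟩
      apply Subtype.ext
      show Fv (zmap x (x, (0 : unitInterval))) = v
      rw [hzero (x, (0 : unitInterval)) rfl, hFvz]
    · have htpos : 0 < ‖z‖ := norm_pos_iff.mpr hz
      set c : Circle := ⟨z / ((‖z‖ : ℝ) : ℂ), by
        show z / ((‖z‖ : ℝ) : ℂ) ∈ Metric.sphere (0:ℂ) 1
        rw [mem_sphere_zero_iff_norm, norm_div]
        simp [hz]⟩ with hc
      set θ : AddCircle L := (AddCircle.homeomorphCircle (ne_of_gt hL)).symm c with hθ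
      have hθc : AddCircle.toCircle θ = c := by
        rw [← AddCircle.homeomorphCircle_apply (ne_of_gt hL), hθ,
          Homeomorph.apply_symm_apply]
      refine ⟨⟦(θ + x, ⟨‖z‖, ⟨htpos.le, habs⟩⟩)⟧, ?_⟩
      apply Subtype.ext
      show Fv (zmap x _) = v
      have : zmap x (θ + x, (⟨‖z‖, ⟨htpos.le, habs⟩⟩ : unitInterval)) = z := by
        rw [zmap]
        show ((‖z‖ : ℝ) : ℂ) * ((AddCircle.toCircle ((θ + x) - x) : ℂ)) = z
        rw [add_sub_cancel_right, hθc]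
        show ((‖z‖ : ℝ) : ℂ) * (z / ((‖z‖ : ℝ) : ℂ)) = z
        rw [mul_div_cancel₀ _ (by exact_mod_cast htpos.ne')]
      rw [this, hFvz]
  have hcont : Continuous G :=
    Continuous.quotient_lift ((Fv_continuous.comp (zmap_continuous x)).subtype_mk _) hlift
  exact ⟨Continuous.homeoOfEquivCompactToT2 (f := Equiv.ofBijective G ⟨hinj, hsurj⟩) hcont⟩

end PH

/-- For every convex polygon `P` and every boundary point `x`, the
perimeter-halving gluing at `x` glues at most `2π` of total interior angle at every
identified point; consequently (by Aleksandrov's theorem, "folds" meaning "admits an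
Aleksandrov gluing") every convex polygon folds to a convex polytope via perimeter halving. -/
theorem perimeter_halving_folds (P : AbstractPolygon) (hconv : P.IsConvex)
    (x : AddCircle P.L) :
    (∀ p, gluedAngle P (perimHalvingSetoid P.L x) p ≤ 2 * π) ∧
    IsAleksandrovGluing P (perimHalvingSetoid P.L x) := by
  have hangle : ∀ p, gluedAngle P (perimHalvingSetoid P.L x) p ≤ 2 * π := by
    intro p
    have hcls : glueClass (perimHalvingSetoid P.L x) p = {p, x + x - p} := glueClass_eq x p
    rw [gluedAngle, hcls]
    rcases eq_or_ne p (x + x - p) with h | h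
    · rw [← h, Set.pair_eq_singleton, finsum_mem_singleton]
      have := hconv p
      linarith [Real.pi_pos]
    · rw [finsum_mem_pair h]
      linarith [hconv p, hconv (x + x - p)]
  refine ⟨hangle, ?_, ?_, hangle, ?_⟩
  · -- length preserving
    intro p q h
    rw [perim_rel_iff] at h
    refine ⟨1, one_pos, ?_, ?_⟩ <;> intro t ht ht1
    · rcases h with rfl | h
      · exact Or.inl ((perim_rel_iff x _ _).2 (Or.inl rfl))
      · refine Or.inr ((perim_rel_iff x _ _).2 (Or.inr ?_))
        have : p + (t : AddCircle P.L) + (q - (t : AddCircle P.L)) = p + q := by abel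
        rw [this, h]
    · rcases h with rfl | h
      · exact Or.inr ((perim_rel_iff x _ _).2 (Or.inl rfl))
      · refine Or.inl ((perim_rel_iff x _ _).2 (Or.inr ?_))
        have : p - (t : AddCircle P.L) + (q + (t : AddCircle P.L)) = p + q := by abel
        rw [this, h]
  · -- classes finite
    intro p
    rw [show glueClass (perimHalvingSetoid P.L x) p = {p, x + x - p} from glueClass_eq x p]
    exact (Set.finite_singleton _).insert p
  · -- sphere
    exact PH.sphere_complex P.Lpos x
end
end

section
/- In any gluing tree arising from an Aleksandrov gluing of a polygon, at any point of the tree of degree d ≠ 2, at most one of the glued boundary points is a non-vertex (interior point of a polygon edge). -/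
open Real Set

noncomputable section

/-- The two "ends" (sides) of a glued boundary point: `(q, true)` is the forward side of
`q`, `(q, false)` its backward side. -/
def glueEnds {L : ℝ} (s : Setoid (AddCircle L)) (p : AddCircle L) :
    Set (AddCircle L × Bool) :=
  {e | e.1 ∈ glueClass s p}

/-- The point at arc length `t` along the side `e`. -/
def endDir {L : ℝ} (e : AddCircle L × Bool) (t : ℝ) : AddCircle L :=
  if e.2 then e.1 + (t : AddCircle L) else e.1 - (t : AddCircle L)

/-- Two sides are identified by the gluing when they are glued to each other near their
base points. -/
def EndRel {L : ℝ} (s : Setoid (AddCircle L)) (e f : AddCircle L × Bool) : Prop :=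
  ∃ ε > (0 : ℝ), ∀ t : ℝ, 0 < t → t < ε → s.r (endDir e t) (endDir f t)

/-- The degree of the gluing-tree node at `p`: the number of classes of identified sides
emanating from the node, i.e. the number of incident tree edges. -/
def treeDegree {L : ℝ} (s : Setoid (AddCircle L)) (p : AddCircle L) : ℕ :=
  Set.ncard {C : Set (AddCircle L × Bool) |
    ∃ e ∈ glueEnds s p, C = {f | f ∈ glueEnds s p ∧ EndRel s e f}}

section AuxProof

variable {L : ℝ}

lemma coe_ne_zero' (hL : 0 < L) {w : ℝ} (h0 : 0 < w) (h1 : w < L) : (↑w : AddCircle L) ≠ 0 := by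
  intro h
  rw [AddCircle.coe_eq_zero_iff] at h
  obtain ⟨n, hn⟩ := h
  rw [zsmul_eq_mul] at hn
  rcases le_or_gt n 0 with hn0 | hn0
  · have : (n:ℝ) ≤ 0 := by exact_mod_cast hn0
    nlinarith
  · have : (1:ℝ) ≤ (n:ℝ) := by exact_mod_cast hn0
    nlinarith

lemma cadd (α β : ℝ) : ((α + β : ℝ) : AddCircle L) = ↑α + ↑β := rfl
lemma cneg (α : ℝ) : ((-α : ℝ) : AddCircle L) = -↑α := rfl
lemma csub (α β : ℝ) : ((α - β : ℝ) : AddCircle L) = ↑α - ↑β := rfl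

lemma eq_shift (u v : AddCircle L) (α β : ℝ) :
    u + (α : AddCircle L) = v + (β : AddCircle L) ↔ u - v = ((β - α : ℝ) : AddCircle L) := by
  rw [csub, sub_eq_sub_iff_add_eq_add, add_comm (β : AddCircle L) v]

lemma eq_shift' (u v : AddCircle L) (α β : ℝ) :
    u + (α : AddCircle L) = v - (β : AddCircle L) ↔ u - v = ((-β - α : ℝ) : AddCircle L) := by
  rw [sub_eq_add_neg, ← cneg, eq_shift]

lemma shift_sub (u : AddCircle L) (α β γ : ℝ) (h : α - β = γ) :
    (u + (α : AddCircle L)) - (β : AddCircle L) = u + (γ : AddCircle L) := by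
  rw [add_sub_assoc, ← csub, h]

lemma shift_add_sub (u : AddCircle L) (α β γ : ℝ) (h : α - β = γ) :
    (u - (α : AddCircle L)) + (β : AddCircle L) = u - (γ : AddCircle L) := by
  rw [sub_eq_add_neg, ← cneg, sub_eq_add_neg, ← cneg, add_assoc, ← cadd]
  congr 2
  rw [← h]; ring

lemma finite_pre (hL : 0 < L) {T : Set (AddCircle L)} (hT : T.Finite) {c : ℝ} (hc0 : c ≠ 0)
    (hc2 : |c| ≤ 2) (g : AddCircle L) :
    {w : ℝ | w ∈ Set.Ioo 0 (L/4) ∧ g + ((c*w : ℝ) : AddCircle L) ∈ T}.Finite := by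
  set f : ℝ → AddCircle L := fun w => g + ((c*w : ℝ) : AddCircle L) with hf
  apply Set.Finite.of_finite_image (f := f)
  · apply hT.subset
    rintro _ ⟨w, hw, rfl⟩
    exact hw.2
  · intro w hw w' hw' hww
    have hww' : ((c*w : ℝ) : AddCircle L) = ↑(c*w') := add_left_cancel hww
    have h0 : ((c*w - c*w' : ℝ) : AddCircle L) = 0 := by
      rw [csub, hww', sub_self]
    rw [AddCircle.coe_eq_zero_iff] at h0
    obtain ⟨n, hn⟩ := h0
    rw [zsmul_eq_mul] at hn
    have habs : |c*w - c*w'| < L/2 := by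
      have he : c*w - c*w' = c * (w - w') := by ring
      rw [he, abs_mul]
      have h1 : |w - w'| < L/4 := by
        rw [abs_sub_lt_iff]
        constructor <;> · obtain ⟨a1,a2⟩ := hw.1; obtain ⟨b1,b2⟩ := hw'.1; linarith
      nlinarith [abs_nonneg (w - w'), abs_nonneg c]
    have hn0 : n = 0 := by
      by_contra hne
      have h1 : (1:ℝ) ≤ |(n:ℝ)| := by exact_mod_cast Int.one_le_abs hne
      have h2 : L ≤ |(n:ℝ) * L| := by rw [abs_mul, abs_of_pos hL]; nlinarith
      rw [hn] at h2; linarith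
    rw [hn0] at hn
    simp only [Int.cast_zero, zero_mul] at hn
    have hcc : c * (w - w') = 0 := by linarith
    rcases mul_eq_zero.mp hcc with h | h
    · exact absurd h hc0
    · linarith [sub_eq_zero.mp (by linarith : w - w' = (0:ℝ))]

lemma exists_eps {F : Set ℝ} (hF : F.Finite) {c : ℝ} (hc : 0 < c) :
    ∃ ε : ℝ, 0 < ε ∧ ε ≤ c ∧ ∀ w, 0 < w → w < ε → w ∉ F := by
  classical
  have hF' : (F ∩ Set.Ioo 0 c).Finite := hF.inter_of_left _
  by_cases hne : (F ∩ Set.Ioo 0 c).Nonempty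
  · have hne' : hF'.toFinset.Nonempty := by rwa [Set.Finite.toFinset_nonempty]
    set m := hF'.toFinset.min' hne' with hm
    have hmem : m ∈ F ∩ Set.Ioo 0 c := by
      rw [← Set.Finite.mem_toFinset hF']; exact hF'.toFinset.min'_mem hne'
    refine ⟨m, hmem.2.1, (hmem.2.2).le, ?_⟩
    intro w hw0 hwm hwF
    have hw : w ∈ F ∩ Set.Ioo 0 c := ⟨hwF, hw0, lt_trans hwm hmem.2.2⟩
    have := hF'.toFinset.min'_le w (by rwa [Set.Finite.mem_toFinset])
    linarith
  · exact ⟨c, hc, le_refl c, fun w hw0 hwc hwF => hne ⟨w, hwF, hw0, hwc⟩⟩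

lemma three_pts (P : AbstractPolygon) (s : Setoid (AddCircle P.L))
    (h : IsAleksandrovGluing P s)
    {x y z : AddCircle P.L} (hx : x ∉ P.V) (hy : y ∉ P.V)
    (hxy : x ≠ y) (hxz : x ≠ z) (hyz : y ≠ z)
    (rxy : s.r x y) (rxz : s.r x z) : False := by
  classical
  have hC : (glueClass s x).Finite := h.classes_finite x
  have hf2 : (glueClass s x ∩ Function.support P.angle).Finite := hC.inter_of_left _
  have hsum : gluedAngle P s x = ∑ q ∈ hf2.toFinset, P.angle q := finsum_mem_eq_sum _ hf2
  have hsub : ({x, y, z} : Finset (AddCircle P.L)) ⊆ hf2.toFinset := by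
    intro q hq
    simp only [Finset.mem_insert, Finset.mem_singleton] at hq
    have hq' : q ∈ glueClass s x := by
      rcases hq with rfl|rfl|rfl
      · exact s.iseqv.refl q
      · exact rxy
      · exact rxz
    rw [Set.Finite.mem_toFinset]
    exact ⟨hq', by simp only [Function.mem_support]; exact (P.angle_pos q).ne'⟩
  have hsle : ∑ q ∈ ({x,y,z} : Finset _), P.angle q ≤ ∑ q ∈ hf2.toFinset, P.angle q :=
    Finset.sum_le_sum_of_subset_of_nonneg hsub (fun i _ _ => (P.angle_pos i).le)
  have hxyz : ∑ q ∈ ({x,y,z} : Finset _), P.angle q = P.angle x + P.angle y + P.angle z := by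
    rw [Finset.sum_insert (by simp [hxy, hxz]), Finset.sum_insert (by simp [hyz]),
      Finset.sum_singleton]
    ring
  have h2 := h.angle_le x
  have hzpos := P.angle_pos z
  rw [P.nonvertex_angle x hx, P.nonvertex_angle y hy] at hxyz
  rw [hsum] at h2
  linarith [hsle.trans h2]

end AuxProof

section MainDich

lemma main_dichotomy (P : AbstractPolygon) (s : Setoid (AddCircle P.L))
    (h : IsAleksandrovGluing P s)
    {x y : AddCircle P.L} (hxy : x ≠ y) (hx : x ∉ P.V) (hy : y ∉ P.V)
    (rxy : s.r x y) (a : ℝ) (ha : a = 1 ∨ a = -1) :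
    (∃ ε > (0:ℝ), ∀ t : ℝ, 0 < t → t < ε →
        s.r (x + ((a*t : ℝ) : AddCircle P.L)) (y + (t : AddCircle P.L))) ∨
    (∃ ε > (0:ℝ), ∀ t : ℝ, 0 < t → t < ε →
        s.r (x + ((a*t : ℝ) : AddCircle P.L)) (y - (t : AddCircle P.L))) := by
  classical
  have hL : 0 < P.L := P.Lpos
  -- the two-sided step lemma from length preservation
  have step : ∀ (X Y : AddCircle P.L), s.r X Y → ∃ ε' > (0:ℝ), ∀ w : ℝ, w ≠ 0 → |w| < ε' →
      s.r (X + ((a*w : ℝ) : AddCircle P.L)) (Y + (w : AddCircle P.L)) ∨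
      s.r (X + ((a*w : ℝ) : AddCircle P.L)) (Y - (w : AddCircle P.L)) := by
    intro X Y hXY
    obtain ⟨ε', hε', c1, c2⟩ := h.length_preserving X Y hXY
    refine ⟨ε', hε', ?_⟩
    intro w hw0 hwa
    rcases lt_or_gt_of_ne hw0 with hneg | hpos
    · have hu : 0 < -w := by linarith
      have hu' : -w < ε' := by rwa [abs_of_neg hneg] at hwa
      rcases ha with rfl | rfl
      · have hc := c2 (-w) hu hu'
        have e1 : X - ((-w : ℝ) : AddCircle P.L) = X + ((1*w : ℝ) : AddCircle P.L) := by
          rw [cneg, sub_neg_eq_add, one_mul]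
        have e2 : Y + ((-w : ℝ) : AddCircle P.L) = Y - (w : AddCircle P.L) := by
          rw [cneg, ← sub_eq_add_neg]
        have e3 : Y - ((-w : ℝ) : AddCircle P.L) = Y + (w : AddCircle P.L) := by
          rw [cneg, sub_neg_eq_add]
        rw [e1, e2, e3] at hc
        tauto
      · have hc := c1 (-w) hu hu'
        have e1 : X + ((-w : ℝ) : AddCircle P.L) = X + (((-1)*w : ℝ) : AddCircle P.L) := by
          norm_num
        have e2 : Y + ((-w : ℝ) : AddCircle P.L) = Y - (w : AddCircle P.L) := by
          rw [cneg, ← sub_eq_add_neg]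
        have e3 : Y - ((-w : ℝ) : AddCircle P.L) = Y + (w : AddCircle P.L) := by
          rw [cneg, sub_neg_eq_add]
        rw [e1, e2, e3] at hc
        tauto
    · rcases ha with rfl | rfl
      · have hc := c1 w hpos (by rwa [abs_of_pos hpos] at hwa)
        rw [show X + (w : AddCircle P.L) = X + ((1*w : ℝ) : AddCircle P.L) by rw [one_mul]] at hc
        tauto
      · have hc := c2 w hpos (by rwa [abs_of_pos hpos] at hwa)
        rw [show X - (w : AddCircle P.L) = X + (((-1)*w : ℝ) : AddCircle P.L) by
          rw [neg_one_mul, cneg, ← sub_eq_add_neg]] at hc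
        tauto
  obtain ⟨ε0, hε00, st0⟩ := step x y rxy
  -- the finite bad set
  have hV := P.Vfin
  have hB1 : {w : ℝ | w ∈ Set.Ioo (0:ℝ) (P.L/4) ∧ x + ((a*w : ℝ) : AddCircle P.L) ∈ P.V}.Finite :=
    finite_pre hL hV (by rcases ha with rfl|rfl <;> norm_num)
      (by rcases ha with rfl|rfl <;> norm_num) x
  have hB2 : {w : ℝ | w ∈ Set.Ioo (0:ℝ) (P.L/4) ∧ y + (w : AddCircle P.L) ∈ P.V}.Finite := by
    apply (finite_pre hL hV (c := 1) one_ne_zero (by norm_num) y).subset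
    rintro w ⟨h1, h2⟩
    exact ⟨h1, by rw [one_mul]; exact h2⟩
  have hB3 : {w : ℝ | w ∈ Set.Ioo (0:ℝ) (P.L/4) ∧ y - (w : AddCircle P.L) ∈ P.V}.Finite := by
    apply (finite_pre hL hV (c := -1) (by norm_num) (by norm_num) y).subset
    rintro w ⟨h1, h2⟩
    exact ⟨h1, by rw [neg_one_mul, cneg, ← sub_eq_add_neg]; exact h2⟩
  have hB4 : {w : ℝ | w ∈ Set.Ioo (0:ℝ) (P.L/4) ∧ x - y = ((2*w : ℝ) : AddCircle P.L)}.Finite := by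
    apply (finite_pre hL (Set.finite_singleton (x - y)) (c := 2) two_ne_zero (by norm_num)
      0).subset
    rintro w ⟨h1, h2⟩
    exact ⟨h1, by rw [zero_add]; exact Set.mem_singleton_iff.mpr h2.symm⟩
  have hB5 : {w : ℝ | w ∈ Set.Ioo (0:ℝ) (P.L/4) ∧ x - y = ((-(2*w) : ℝ) : AddCircle P.L)}.Finite := by
    apply (finite_pre hL (Set.finite_singleton (x - y)) (c := -2) (by norm_num) (by norm_num)
      0).subset
    rintro w ⟨h1, h2⟩
    have h3 : (0:AddCircle P.L) + (((-2)*w : ℝ) : AddCircle P.L) ∈ ({x - y} : Set (AddCircle P.L)) := by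
      rw [zero_add, show (-2)*w = -(2*w) by ring]
      exact Set.mem_singleton_iff.mpr h2.symm
    exact ⟨h1, h3⟩
  set Bad := {w : ℝ | w ∈ Set.Ioo (0:ℝ) (P.L/4) ∧ x + ((a*w : ℝ) : AddCircle P.L) ∈ P.V}
      ∪ ({w : ℝ | w ∈ Set.Ioo (0:ℝ) (P.L/4) ∧ y + (w : AddCircle P.L) ∈ P.V}
      ∪ ({w : ℝ | w ∈ Set.Ioo (0:ℝ) (P.L/4) ∧ y - (w : AddCircle P.L) ∈ P.V}
      ∪ ({w : ℝ | w ∈ Set.Ioo (0:ℝ) (P.L/4) ∧ x - y = ((2*w : ℝ) : AddCircle P.L)}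
      ∪ {w : ℝ | w ∈ Set.Ioo (0:ℝ) (P.L/4) ∧ x - y = ((-(2*w) : ℝ) : AddCircle P.L)}))) with hBad
  have hBadF : Bad.Finite := hB1.union (hB2.union (hB3.union (hB4.union hB5)))
  obtain ⟨ε1', hε1'0, hε1'le, hgood⟩ := exists_eps hBadF
    (c := min ε0 (P.L/8)) (lt_min hε00 (by linarith))
  set ε1 := ε1'/2 with hε1def
  have hε10 : 0 < ε1 := by positivity
  have hε1ε0 : ε1 < ε0 := by
    have := min_le_left ε0 (P.L/8); simp only [hε1def]; linarith
  have hε1L : 2*ε1 ≤ P.L/8 := by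
    have := min_le_right ε0 (P.L/8); simp only [hε1def]; linarith
  -- all small parameters are good
  have nb : ∀ v : ℝ, 0 < v → v < 2*ε1 →
      x + ((a*v : ℝ) : AddCircle P.L) ∉ P.V ∧ y + (v : AddCircle P.L) ∉ P.V ∧
      y - (v : AddCircle P.L) ∉ P.V ∧ x - y ≠ ((2*v : ℝ) : AddCircle P.L) ∧
      x - y ≠ ((-(2*v) : ℝ) : AddCircle P.L) := by
    intro v hv0 hv2
    have hvW : v ∈ Set.Ioo (0:ℝ) (P.L/4) := ⟨hv0, by linarith⟩
    have hvB : v ∉ Bad := hgood v hv0 (by rw [hε1def] at hv2; linarith)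
    rw [hBad] at hvB
    exact ⟨fun hc => hvB (Set.mem_union_left _ ⟨hvW, hc⟩),
      fun hc => hvB (Set.mem_union_right _ (Set.mem_union_left _ ⟨hvW, hc⟩)),
      fun hc => hvB (Set.mem_union_right _ (Set.mem_union_right _
        (Set.mem_union_left _ ⟨hvW, hc⟩))),
      fun hc => hvB (Set.mem_union_right _ (Set.mem_union_right _ (Set.mem_union_right _
        (Set.mem_union_left _ ⟨hvW, hc⟩)))),
      fun hc => hvB (Set.mem_union_right _ (Set.mem_union_right _ (Set.mem_union_right _
        (Set.mem_union_right _ ⟨hvW, hc⟩))))⟩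
  set A := {t : ℝ | t ∈ Set.Ioo 0 ε1 ∧ s.r (x + ((a*t : ℝ) : AddCircle P.L)) (y + (t : AddCircle P.L))} with hA
  set B := {t : ℝ | t ∈ Set.Ioo 0 ε1 ∧ s.r (x + ((a*t : ℝ) : AddCircle P.L)) (y - (t : AddCircle P.L))} with hB
  have cover : ∀ t : ℝ, t ∈ Set.Ioo 0 ε1 → t ∈ A ∪ B := by
    intro t ht
    rcases st0 t (ne_of_gt ht.1) (by rw [abs_of_pos ht.1]; linarith [ht.2]) with hc | hc
    · exact Or.inl ⟨ht, hc⟩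
    · exact Or.inr ⟨ht, hc⟩
  -- disjointness of A and B
  have disj : ∀ t : ℝ, t ∈ A → t ∈ B → False := by
    intro t htA htB
    obtain ⟨htI, hrA⟩ := htA
    obtain ⟨_, hrB⟩ := htB
    have ht2 : t < 2*ε1 := by linarith [htI.2]
    obtain ⟨nb1, nb2, nb3, nb4, nb5⟩ := nb t htI.1 ht2
    have d1 : x + ((a*t : ℝ) : AddCircle P.L) ≠ y + (t : AddCircle P.L) := by
      intro hc
      rw [eq_shift] at hc
      rcases ha with rfl | rfl
      · rw [show t - 1*t = 0 by ring] at hc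
        exact hxy (sub_eq_zero.mp (by rw [hc]; exact rfl))
      · exact nb4 (by rw [hc]; congr 1; ring)
    have d2 : x + ((a*t : ℝ) : AddCircle P.L) ≠ y - (t : AddCircle P.L) := by
      intro hc
      rw [eq_shift'] at hc
      rcases ha with rfl | rfl
      · exact nb5 (by rw [hc]; congr 1; ring)
      · rw [show -t - (-1)*t = 0 by ring] at hc
        exact hxy (sub_eq_zero.mp (by rw [hc]; exact rfl))
    have d3 : y + (t : AddCircle P.L) ≠ y - (t : AddCircle P.L) := by
      intro hc
      rw [eq_shift'] at hc
      rw [sub_self] at hc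
      have h2t : ((-t - t : ℝ) : AddCircle P.L) ≠ 0 := by
        rw [show -t - t = -(2*t) by ring, cneg, neg_ne_zero]
        exact coe_ne_zero' hL (by linarith [htI.1]) (by linarith [htI.2])
      exact h2t hc.symm
    exact three_pts P s h nb1 nb2 d1 d2 d3 hrA hrB
  -- propagation for A
  have propA : ∀ t : ℝ, t ∈ A → ∃ δ > (0:ℝ), ∀ t' : ℝ,
      t' ∈ Set.Ioo (t - δ) (t + δ) → t' ∈ Set.Ioo 0 ε1 → t' ∈ A := by
    rintro t ⟨htI, hrt⟩
    obtain ⟨ε', hε'0, st⟩ := step (x + ((a*t : ℝ) : AddCircle P.L)) (y + (t : AddCircle P.L)) hrt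
    refine ⟨ε', hε'0, ?_⟩
    intro t' hball ht'I
    by_cases hteq : t' = t
    · exact hteq ▸ ⟨htI, hrt⟩
    refine ⟨ht'I, ?_⟩
    by_contra hA'
    have hrB : s.r (x + ((a*t' : ℝ) : AddCircle P.L)) (y - (t' : AddCircle P.L)) := by
      rcases cover t' ht'I with hA'' | hB''
      · exact absurd hA''.2 hA'
      · exact hB''.2
    set w := t' - t with hw
    have hw0 : w ≠ 0 := sub_ne_zero.mpr hteq
    have hwa : |w| < ε' := by
      rw [abs_sub_lt_iff]
      exact ⟨by linarith [hball.2], by linarith [hball.1]⟩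
    have EX : (x + ((a*t : ℝ) : AddCircle P.L)) + ((a*w : ℝ) : AddCircle P.L)
        = x + ((a*t' : ℝ) : AddCircle P.L) := by
      rw [add_assoc, ← cadd]; congr 2; rw [hw]; ring
    have EY1 : (y + (t : AddCircle P.L)) + (w : AddCircle P.L) = y + (t' : AddCircle P.L) := by
      rw [add_assoc, ← cadd]; congr 2; rw [hw]; ring
    have EY2 : (y + (t : AddCircle P.L)) - (w : AddCircle P.L)
        = y + ((t - w : ℝ) : AddCircle P.L) := shift_sub y t w (t - w) rfl
    rcases st w hw0 hwa with hr | hr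
    · rw [EX, EY1] at hr; exact hA' hr
    · rw [EX, EY2] at hr
      have ht'2 : t' < 2*ε1 := by linarith [ht'I.2]
      obtain ⟨nb1, nb2, nb3, nb4, nb5⟩ := nb t' ht'I.1 ht'2
      have d1 : x + ((a*t' : ℝ) : AddCircle P.L) ≠ y - (t' : AddCircle P.L) := by
        intro hc
        rw [eq_shift'] at hc
        rcases ha with rfl | rfl
        · exact nb5 (by rw [hc]; congr 1; ring)
        · rw [show -t' - (-1)*t' = 0 by ring] at hc
          exact hxy (sub_eq_zero.mp (by rw [hc]; exact rfl))
      have d2 : x + ((a*t' : ℝ) : AddCircle P.L) ≠ y + ((t - w : ℝ) : AddCircle P.L) := by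
        intro hc
        rw [eq_shift] at hc
        rcases ha with rfl | rfl
        · -- (t - w) - 1*t' = 2*(t - t')
          rcases lt_or_gt_of_ne hteq with hlt | hgt
          · -- t' < t : value is 2*(t-t') > 0
            have hv0 : 0 < t - t' := by linarith
            have hv2 : t - t' < 2*ε1 := by linarith [htI.2, ht'I.1]
            exact (nb (t - t') hv0 hv2).2.2.2.1 (by rw [hc]; congr 1; rw [hw]; ring)
          · have hv0 : 0 < t' - t := by linarith
            have hv2 : t' - t < 2*ε1 := by linarith [ht'I.2, htI.1]
            exact (nb (t' - t) hv0 hv2).2.2.2.2 (by rw [hc]; congr 1; rw [hw]; ring)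
        · -- (t - w) - (-1)*t' = 2*t
          exact (nb t htI.1 (by linarith [htI.2])).2.2.2.1 (by rw [hc]; congr 1; rw [hw]; ring)
      have d3 : y - (t' : AddCircle P.L) ≠ y + ((t - w : ℝ) : AddCircle P.L) := by
        intro hc
        rw [sub_eq_add_neg, ← cneg, eq_shift, sub_self] at hc
        have h2t : (((t - w) - -t' : ℝ) : AddCircle P.L) ≠ 0 := by
          rw [show (t - w) - -t' = 2*t by rw [hw]; ring]
          exact coe_ne_zero' hL (by linarith [htI.1]) (by linarith [htI.2])
        exact h2t hc.symm
      exact three_pts P s h nb1 nb3 d1 d2 d3 hrB hr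
  -- propagation for B
  have propB : ∀ t : ℝ, t ∈ B → ∃ δ > (0:ℝ), ∀ t' : ℝ,
      t' ∈ Set.Ioo (t - δ) (t + δ) → t' ∈ Set.Ioo 0 ε1 → t' ∈ B := by
    rintro t ⟨htI, hrt⟩
    obtain ⟨ε', hε'0, st⟩ := step (x + ((a*t : ℝ) : AddCircle P.L)) (y - (t : AddCircle P.L)) hrt
    refine ⟨ε', hε'0, ?_⟩
    intro t' hball ht'I
    by_cases hteq : t' = t
    · exact hteq ▸ ⟨htI, hrt⟩
    refine ⟨ht'I, ?_⟩
    by_contra hB'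
    have hrA : s.r (x + ((a*t' : ℝ) : AddCircle P.L)) (y + (t' : AddCircle P.L)) := by
      rcases cover t' ht'I with hA'' | hB''
      · exact hA''.2
      · exact absurd hB''.2 hB'
    set w := t' - t with hw
    have hw0 : w ≠ 0 := sub_ne_zero.mpr hteq
    have hwa : |w| < ε' := by
      rw [abs_sub_lt_iff]
      exact ⟨by linarith [hball.2], by linarith [hball.1]⟩
    have EX : (x + ((a*t : ℝ) : AddCircle P.L)) + ((a*w : ℝ) : AddCircle P.L)
        = x + ((a*t' : ℝ) : AddCircle P.L) := by
      rw [add_assoc, ← cadd]; congr 2; rw [hw]; ring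
    have EY1 : (y - (t : AddCircle P.L)) + (w : AddCircle P.L)
        = y - ((t - w : ℝ) : AddCircle P.L) := shift_add_sub y t w (t - w) rfl
    have EY2 : (y - (t : AddCircle P.L)) - (w : AddCircle P.L) = y - (t' : AddCircle P.L) := by
      rw [sub_sub, ← cadd]; congr 2; rw [hw]; ring
    rcases st w hw0 hwa with hr | hr
    · rw [EX, EY1] at hr
      -- hr : r X (y - ↑(t-w)) ; hrA : r X (y + ↑t')
      have ht'2 : t' < 2*ε1 := by linarith [ht'I.2]
      obtain ⟨nb1, nb2, nb3, nb4, nb5⟩ := nb t' ht'I.1 ht'2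
      have d1 : x + ((a*t' : ℝ) : AddCircle P.L) ≠ y + (t' : AddCircle P.L) := by
        intro hc
        rw [eq_shift] at hc
        rcases ha with rfl | rfl
        · rw [show t' - 1*t' = 0 by ring] at hc
          exact hxy (sub_eq_zero.mp (by rw [hc]; exact rfl))
        · exact nb4 (by rw [hc]; congr 1; ring)
      have d2 : x + ((a*t' : ℝ) : AddCircle P.L) ≠ y - ((t - w : ℝ) : AddCircle P.L) := by
        intro hc
        rw [eq_shift'] at hc
        rcases ha with rfl | rfl
        · -- -(t-w) - 1*t' = -(2*t)
          exact (nb t htI.1 (by linarith [htI.2])).2.2.2.2 (by rw [hc]; congr 1; rw [hw]; ring)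
        · -- -(t-w) - (-1)*t' = 2*(t'-t)
          rcases lt_or_gt_of_ne hteq with hlt | hgt
          · have hv0 : 0 < t - t' := by linarith
            have hv2 : t - t' < 2*ε1 := by linarith [htI.2, ht'I.1]
            exact (nb (t - t') hv0 hv2).2.2.2.2 (by rw [hc]; congr 1; rw [hw]; ring)
          · have hv0 : 0 < t' - t := by linarith
            have hv2 : t' - t < 2*ε1 := by linarith [ht'I.2, htI.1]
            exact (nb (t' - t) hv0 hv2).2.2.2.1 (by rw [hc]; congr 1; rw [hw]; ring)
      have d3 : y + (t' : AddCircle P.L) ≠ y - ((t - w : ℝ) : AddCircle P.L) := by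
        intro hc
        rw [eq_shift', sub_self] at hc
        have h2t : ((-(t - w) - t' : ℝ) : AddCircle P.L) ≠ 0 := by
          rw [show -(t - w) - t' = -(2*t) by rw [hw]; ring, cneg, neg_ne_zero]
          exact coe_ne_zero' hL (by linarith [htI.1]) (by linarith [htI.2])
        exact h2t hc.symm
      exact three_pts P s h nb1 nb2 d1 d2 d3 hrA hr
    · rw [EX, EY2] at hr; exact hB' hr
  -- connectedness argument
  by_cases hAe : A = ∅
  · right
    refine ⟨ε1, hε10, ?_⟩
    intro t ht0 htε
    rcases cover t ⟨ht0, htε⟩ with hA' | hB'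
    · rw [hAe] at hA'; exact absurd hA' (Set.notMem_empty t)
    · exact hB'.2
  by_cases hBe : B = ∅
  · left
    refine ⟨ε1, hε10, ?_⟩
    intro t ht0 htε
    rcases cover t ⟨ht0, htε⟩ with hA' | hB'
    · exact hA'.2
    · rw [hBe] at hB'; exact absurd hB' (Set.notMem_empty t)
  · exfalso
    choose! δA hδA0 hδAP using propA
    choose! δB hδB0 hδBP using propB
    set U := ⋃ (t : ℝ) (_ : t ∈ A), Set.Ioo (t - δA t) (t + δA t) with hU
    set U' := ⋃ (t : ℝ) (_ : t ∈ B), Set.Ioo (t - δB t) (t + δB t) with hU'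
    have hUo : IsOpen U := isOpen_iUnion fun t => isOpen_iUnion fun _ => isOpen_Ioo
    have hU'o : IsOpen U' := isOpen_iUnion fun t => isOpen_iUnion fun _ => isOpen_Ioo
    have hsub : Set.Ioo 0 ε1 ⊆ U ∪ U' := by
      intro t ht
      rcases cover t ht with hA' | hB'
      · left
        exact Set.mem_biUnion hA' ⟨by linarith [hδA0 t hA'], by linarith [hδA0 t hA']⟩
      · right
        exact Set.mem_biUnion hB' ⟨by linarith [hδB0 t hB'], by linarith [hδB0 t hB']⟩
    have hne1 : (Set.Ioo 0 ε1 ∩ U).Nonempty := by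
      obtain ⟨tA, htA⟩ := Set.nonempty_iff_ne_empty.mpr hAe
      exact ⟨tA, htA.1, Set.mem_biUnion htA
        ⟨by linarith [hδA0 tA htA], by linarith [hδA0 tA htA]⟩⟩
    have hne2 : (Set.Ioo 0 ε1 ∩ U').Nonempty := by
      obtain ⟨tB, htB⟩ := Set.nonempty_iff_ne_empty.mpr hBe
      exact ⟨tB, htB.1, Set.mem_biUnion htB
        ⟨by linarith [hδB0 tB htB], by linarith [hδB0 tB htB]⟩⟩
    obtain ⟨z, hzI, hzU, hzU'⟩ := isPreconnected_Ioo U U' hUo hU'o hsub hne1 hne2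
    obtain ⟨t1, ht1A, hz1⟩ := Set.mem_iUnion₂.mp hzU
    obtain ⟨t2, ht2B, hz2⟩ := Set.mem_iUnion₂.mp hzU'
    exact disj z (hδAP t1 ht1A z hz1 hzI) (hδBP t2 ht2B z hz2 hzI)

end MainDich

/-- In any gluing tree of an Aleksandrov gluing of a polygon, at any
node of degree `d ≠ 2`, at most one of the boundary points glued there is a non-vertex
(a point in the interior of a polygon edge). -/
theorem at_most_one_nonvertex_at_branch (P : AbstractPolygon)
    (s : Setoid (AddCircle P.L)) (h : IsAleksandrovGluing P s)
    (p : AddCircle P.L) (hd : treeDegree s p ≠ 2) :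
    Set.ncard {q ∈ glueClass s p | q ∉ P.V} ≤ 1 := by
  classical
  have hL : 0 < P.L := P.Lpos
  by_contra hcon
  have h1 : 1 < Set.ncard {q ∈ glueClass s p | q ∉ P.V} := not_le.mp hcon
  have hSfin : {q ∈ glueClass s p | q ∉ P.V}.Finite :=
    (h.classes_finite p).subset (Set.sep_subset _ _)
  obtain ⟨q1, q2, hq1, hq2, hne⟩ := (Set.one_lt_ncard_iff hSfin).mp h1
  obtain ⟨hq1c, hq1v⟩ := hq1
  obtain ⟨hq2c, hq2v⟩ := hq2
  have hr12 : s.r q1 q2 := s.iseqv.trans (s.iseqv.symm hq1c) hq2c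
  have hr21 : s.r q2 q1 := s.iseqv.symm hr12
  -- the glue class of p is exactly {q1, q2}
  have hclass : ∀ z, z ∈ glueClass s p → z = q1 ∨ z = q2 := by
    intro z hz
    by_contra hzc
    push_neg at hzc
    exact three_pts P s h hq1v hq2v hne (Ne.symm hzc.1) (Ne.symm hzc.2) hr12
      (s.iseqv.trans (s.iseqv.symm hq1c) hz)
  -- EndRel is an equivalence-like relation
  have ERsymm : ∀ e f, EndRel s e f → EndRel s f e := by
    rintro e f ⟨ε, hε, hf⟩
    exact ⟨ε, hε, fun t ht1 ht2 => s.iseqv.symm (hf t ht1 ht2)⟩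
  have ERtrans : ∀ e f g, EndRel s e f → EndRel s f g → EndRel s e g := by
    rintro e f g ⟨ε, hε, hf⟩ ⟨ε', hε', hf'⟩
    exact ⟨min ε ε', lt_min hε hε', fun t ht1 ht2 =>
      s.iseqv.trans (hf t ht1 (lt_of_lt_of_le ht2 (min_le_left _ _)))
        (hf' t ht1 (lt_of_lt_of_le ht2 (min_le_right _ _)))⟩
  have ERrefl : ∀ e, EndRel s e e := fun e => ⟨1, one_pos, fun t _ _ => s.iseqv.refl _⟩
  -- conversions
  have en1 : ∀ (q : AddCircle P.L) (t : ℝ), q + ((1*t : ℝ) : AddCircle P.L) = q + ↑t :=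
    fun q t => by rw [one_mul]
  have en2 : ∀ (q : AddCircle P.L) (t : ℝ), q + (((-1)*t : ℝ) : AddCircle P.L) = q - ↑t :=
    fun q t => by rw [neg_one_mul, cneg, ← sub_eq_add_neg]
  -- each end of q1 is glued to some end of q2, and vice versa
  have endpair : ∀ (u v : AddCircle P.L), u ≠ v → u ∉ P.V → v ∉ P.V → s.r u v →
      ∀ b : Bool, ∃ c : Bool, EndRel s (u, b) (v, c) := by
    intro u v huv hu hv huvr b
    cases b
    · rcases main_dichotomy P s h huv hu hv huvr (-1) (Or.inr rfl) with ⟨ε,hε,hf⟩ | ⟨ε,hε,hf⟩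
      · refine ⟨true, ε, hε, fun t ht1 ht2 => ?_⟩
        have hx := hf t ht1 ht2
        rw [en2] at hx
        exact hx
      · refine ⟨false, ε, hε, fun t ht1 ht2 => ?_⟩
        have hx := hf t ht1 ht2
        rw [en2] at hx
        exact hx
    · rcases main_dichotomy P s h huv hu hv huvr 1 (Or.inl rfl) with ⟨ε,hε,hf⟩ | ⟨ε,hε,hf⟩
      · refine ⟨true, ε, hε, fun t ht1 ht2 => ?_⟩
        have hx := hf t ht1 ht2
        rw [en1] at hx
        exact hx
      · refine ⟨false, ε, hε, fun t ht1 ht2 => ?_⟩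
        have hx := hf t ht1 ht2
        rw [en1] at hx
        exact hx
  obtain ⟨c1, hc1⟩ := endpair q1 q2 hne hq1v hq2v hr12 true
  obtain ⟨c2, hc2⟩ := endpair q1 q2 hne hq1v hq2v hr12 false
  obtain ⟨c3, hc3⟩ := endpair q2 q1 hne.symm hq2v hq1v hr21 true
  obtain ⟨c4, hc4⟩ := endpair q2 q1 hne.symm hq2v hq1v hr21 false
  -- no fold at a non-vertex glued to another non-vertex
  have nofold : ∀ (u v : AddCircle P.L), u ∉ P.V → v ∉ P.V → u ≠ v →
      (∃ c : Bool, EndRel s (u, true) (v, c)) → ¬ EndRel s (u, true) (u, false) := by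
    rintro u v hu hv huv ⟨c, hev⟩ hfold
    obtain ⟨εf, hεf, Ff⟩ := hfold
    obtain ⟨εe, hεe, Fe⟩ := hev
    have hBa : {w : ℝ | w ∈ Set.Ioo 0 (P.L/4) ∧ u + (w : AddCircle P.L) ∈ P.V}.Finite := by
      apply (finite_pre hL P.Vfin (c := 1) one_ne_zero (by norm_num) u).subset
      rintro w ⟨w1, w2⟩
      exact ⟨w1, by rw [one_mul]; exact w2⟩
    have hBb : {w : ℝ | w ∈ Set.Ioo 0 (P.L/4) ∧ u - (w : AddCircle P.L) ∈ P.V}.Finite := by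
      apply (finite_pre hL P.Vfin (c := -1) (by norm_num) (by norm_num) u).subset
      rintro w ⟨w1, w2⟩
      exact ⟨w1, by rw [neg_one_mul, cneg, ← sub_eq_add_neg]; exact w2⟩
    have hBc : {w : ℝ | w ∈ Set.Ioo 0 (P.L/4) ∧ u - v = ((2*w : ℝ) : AddCircle P.L)}.Finite := by
      apply (finite_pre hL (Set.finite_singleton (u - v)) (c := 2) two_ne_zero (by norm_num)
        0).subset
      rintro w ⟨w1, w2⟩
      exact ⟨w1, by rw [zero_add]; exact Set.mem_singleton_iff.mpr w2.symm⟩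
    have hBd : {w : ℝ | w ∈ Set.Ioo 0 (P.L/4) ∧ u - v = ((-(2*w) : ℝ) : AddCircle P.L)}.Finite := by
      apply (finite_pre hL (Set.finite_singleton (u - v)) (c := -2) (by norm_num) (by norm_num)
        0).subset
      rintro w ⟨w1, w2⟩
      have w3 : (0:AddCircle P.L) + (((-2)*w : ℝ) : AddCircle P.L) ∈ ({u - v} : Set (AddCircle P.L)) := by
        rw [zero_add, show (-2)*w = -(2*w) by ring]
        exact Set.mem_singleton_iff.mpr w2.symm
      exact ⟨w1, w3⟩
    obtain ⟨ε, hε0, hεle, hgood⟩ := exists_eps ((hBa.union hBb).union (hBc.union hBd))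
      (c := min (min εf εe) (P.L/8)) (lt_min (lt_min hεf hεe) (by linarith))
    set t := ε/2 with htdef
    have ht0 : 0 < t := by positivity
    have htε : t < ε := by rw [htdef]; linarith
    have htf : t < εf := lt_of_lt_of_le htε (hεle.trans ((min_le_left _ _).trans (min_le_left _ _)))
    have hte : t < εe := lt_of_lt_of_le htε (hεle.trans ((min_le_left _ _).trans (min_le_right _ _)))
    have htL : t < P.L/8 := lt_of_lt_of_le htε (hεle.trans (min_le_right _ _))
    have htW : t ∈ Set.Ioo (0:ℝ) (P.L/4) := ⟨ht0, by linarith⟩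
    have htB := hgood t ht0 htε
    have nb1 : u + (t : AddCircle P.L) ∉ P.V :=
      fun hc => htB (Set.mem_union_left _ (Set.mem_union_left _ ⟨htW, hc⟩))
    have nb2 : u - (t : AddCircle P.L) ∉ P.V :=
      fun hc => htB (Set.mem_union_left _ (Set.mem_union_right _ ⟨htW, hc⟩))
    have nb3 : u - v ≠ ((2*t : ℝ) : AddCircle P.L) :=
      fun hc => htB (Set.mem_union_right _ (Set.mem_union_left _ ⟨htW, hc⟩))
    have nb4 : u - v ≠ ((-(2*t) : ℝ) : AddCircle P.L) :=
      fun hc => htB (Set.mem_union_right _ (Set.mem_union_right _ ⟨htW, hc⟩))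
    have rel1 : s.r (u + (t : AddCircle P.L)) (u - (t : AddCircle P.L)) := Ff t ht0 htf
    have d1 : u + (t : AddCircle P.L) ≠ u - (t : AddCircle P.L) := by
      intro hc
      rw [eq_shift', sub_self] at hc
      have h2t : ((-t - t : ℝ) : AddCircle P.L) ≠ 0 := by
        rw [show -t - t = -(2*t) by ring, cneg, neg_ne_zero]
        exact coe_ne_zero' hL (by linarith) (by linarith)
      exact h2t hc.symm
    cases c
    · -- c = false : other end is v - t
      have rel2 : s.r (u + (t : AddCircle P.L)) (v - (t : AddCircle P.L)) := Fe t ht0 hte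
      have d2 : u + (t : AddCircle P.L) ≠ v - (t : AddCircle P.L) := by
        intro hc
        rw [eq_shift'] at hc
        exact nb4 (by rw [hc]; congr 1; ring)
      have d3 : u - (t : AddCircle P.L) ≠ v - (t : AddCircle P.L) := by
        intro hc
        exact huv (sub_left_inj.mp hc)
      exact three_pts P s h nb1 nb2 d1 d2 d3 rel1 rel2
    · -- c = true : other end is v + t
      have rel2 : s.r (u + (t : AddCircle P.L)) (v + (t : AddCircle P.L)) := Fe t ht0 hte
      have d2 : u + (t : AddCircle P.L) ≠ v + (t : AddCircle P.L) := by
        intro hc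
        rw [eq_shift] at hc
        rw [show t - t = 0 by ring] at hc
        exact huv (sub_eq_zero.mp (by rw [hc]; exact rfl))
      have d3 : u - (t : AddCircle P.L) ≠ v + (t : AddCircle P.L) := by
        intro hc
        rw [sub_eq_add_neg, ← cneg, eq_shift] at hc
        exact nb3 (by rw [hc]; congr 1; ring)
      exact three_pts P s h nb1 nb2 d1 d2 d3 rel1 rel2
  have NF1 : ¬ EndRel s (q1, true) (q1, false) := nofold q1 q2 hq1v hq2v hne ⟨c1, hc1⟩
  have NF2 : ¬ EndRel s (q2, true) (q2, false) := nofold q2 q1 hq2v hq1v hne.symm ⟨c3, hc3⟩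
  -- membership of ends
  have hmemEnds : ∀ e : AddCircle P.L × Bool, e ∈ glueEnds s p ↔ (e.1 = q1 ∨ e.1 = q2) := by
    intro e
    constructor
    · exact fun he => hclass e.1 he
    · rintro (hh | hh)
      · show e.1 ∈ glueClass s p
        rw [hh]; exact hq1c
      · show e.1 ∈ glueClass s p
        rw [hh]; exact hq2c
  have clsEq : ∀ e f, EndRel s e f →
      {g | g ∈ glueEnds s p ∧ EndRel s e g} = {g | g ∈ glueEnds s p ∧ EndRel s f g} := by
    intro e f hef
    ext g
    constructor
    · rintro ⟨hg, hrel⟩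
      exact ⟨hg, ERtrans _ _ _ (ERsymm _ _ hef) hrel⟩
    · rintro ⟨hg, hrel⟩
      exact ⟨hg, ERtrans _ _ _ hef hrel⟩
  have hset : {C : Set (AddCircle P.L × Bool) |
      ∃ e ∈ glueEnds s p, C = {f | f ∈ glueEnds s p ∧ EndRel s e f}} =
      {{f | f ∈ glueEnds s p ∧ EndRel s (q1, true) f},
       {f | f ∈ glueEnds s p ∧ EndRel s (q1, false) f}} := by
    ext C
    constructor
    · rintro ⟨⟨e1, b⟩, he, rfl⟩
      rcases (hmemEnds (e1, b)).mp he with hh | hh <;> subst hh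
      · cases b
        · exact Set.mem_insert_iff.mpr (Or.inr (Set.mem_singleton_iff.mpr rfl))
        · exact Set.mem_insert_iff.mpr (Or.inl rfl)
      · cases b
        · rw [clsEq _ _ hc4]
          cases c4
          · exact Set.mem_insert_iff.mpr (Or.inr (Set.mem_singleton_iff.mpr rfl))
          · exact Set.mem_insert_iff.mpr (Or.inl rfl)
        · rw [clsEq _ _ hc3]
          cases c3
          · exact Set.mem_insert_iff.mpr (Or.inr (Set.mem_singleton_iff.mpr rfl))
          · exact Set.mem_insert_iff.mpr (Or.inl rfl)
    · rintro (rfl | hC)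
      · exact ⟨(q1, true), (hmemEnds _).mpr (Or.inl rfl), rfl⟩
      · rw [Set.mem_singleton_iff] at hC
        exact hC ▸ ⟨(q1, false), (hmemEnds _).mpr (Or.inl rfl), rfl⟩
  have hdist : {f | f ∈ glueEnds s p ∧ EndRel s (q1, true) f}
      ≠ {f | f ∈ glueEnds s p ∧ EndRel s (q1, false) f} := by
    intro hcc
    have hmem1 : (q1, true) ∈ {f | f ∈ glueEnds s p ∧ EndRel s (q1, true) f} :=
      ⟨(hmemEnds _).mpr (Or.inl rfl), ERrefl _⟩
    rw [hcc] at hmem1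
    exact NF1 (ERsymm _ _ hmem1.2)
  apply hd
  unfold treeDegree
  rw [hset]
  exact Set.ncard_pair hdist
end
end
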